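/- Every positive basis of ℝ^d has at most 2d elements. -/

import Mathlib

open scoped BigOperators

/-- The positive (conic) hull of a set: all finite nonnegative linear combinations. -/
def posHull {d : ℕ} (A : Set (EuclideanSpace ℝ (Fin d))) : Set (EuclideanSpace ℝ (Fin d)) :=
  {x | ∃ (n : ℕ) (c : Fin n → ℝ) (f : Fin n → EuclideanSpace ℝ (Fin d)),
    (∀ i, 0 ≤ c i) ∧ (∀ i, f i ∈ A) ∧ x = ∑ i, c i • f i}

/-- `B` is a positive basis of the set `L` (typically a linear subspace). -/
def IsPosBasisOf {d : ℕ} (B L : Set (EuclideanSpace ℝ (Fin d))) : Prop :=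
  posHull B = L ∧ ∀ b ∈ B, posHull (B \ {b}) ≠ L

/-!
Fix `a ∈ A`. By Carathéodory's theorem for cones, `-a = Σ cᵢ aᵢ` with `cᵢ > 0` and the `aᵢ ∈ A`
linearly independent. The set `T = {a, aᵢ}` thus carries a linear relation with strictly positive
coefficients, so the span `W` of `T` lies in the cone of `T`, while `|T| ≤ dim W + 1` and
`dim W ≥ 1`. Modulo `W`, the vectors of `A \ T` map injectively onto a
positive basis of `E ⧸ W`, so by induction on the dimension
`|A| ≤ |T| + 2 (dim E - dim W) ≤ 2 dim E`.
-/

open Module Submodule Finsupp PointedCone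

section

variable {E : Type*} [AddCommGroup E] [Module ℝ E]

namespace PointedCone

lemma span_le_of_forall_neg_mem {C : PointedCone ℝ E} {s : Set E}
    (h : ∀ x ∈ s, x ∈ C ∧ -x ∈ C) : (span ℝ s : PointedCone ℝ E) ≤ C :=
  gc_ofSubmodule_lineal.le_iff_le.2 (span_le.2 h)

lemma fg_top [FiniteDimensional ℝ E] : (⊤ : PointedCone ℝ E).FG := by
  let b := Set.range (finBasis ℝ E)
  refine fg_def.2 ⟨b ∪ -b, (Set.finite_range _).union (Set.finite_range _).neg, top_le_iff.1 ?_⟩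
  calc (⊤ : PointedCone ℝ E) = (span ℝ b : PointedCone ℝ E) := by rw [(finBasis ℝ E).span_eq]; rfl
    _ ≤ hull ℝ (b ∪ -b) := span_le_of_forall_neg_mem fun x hx =>
        ⟨subset_hull (Or.inl hx), subset_hull (Or.inr (by simpa using hx))⟩

lemma linearCombination_mem_hull {c : E →₀ ℝ} (hc : ∀ y, 0 ≤ c y) :
    linearCombination ℝ id c ∈ hull ℝ (c.support : Set E) :=
  mem_hull_set.2 ⟨c, subset_rfl, hc, by simp [linearCombination_apply]⟩

lemma exists_support_ssubset_of_relation {c μ : E →₀ ℝ} (hc : ∀ y, 0 ≤ c y)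
    (hμc : μ.support ⊆ c.support) (hμ : linearCombination ℝ id μ = 0) (hpos : ∃ y, 0 < μ y) :
    ∃ c' : E →₀ ℝ, c'.support ⊂ c.support ∧ (∀ y, 0 ≤ c' y) ∧
      linearCombination ℝ id c' = linearCombination ℝ id c := by
  classical
  obtain ⟨y₀, hy₀, hmin⟩ := (μ.support.filter (0 < μ ·)).exists_min_image (fun y => c y / μ y)
    (by obtain ⟨y, hy⟩ := hpos; exact ⟨y, by simpa [hy.ne'] using hy⟩)
  simp only [Finset.mem_filter, Finsupp.mem_support_iff] at hy₀ hmin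
  -- `ε` is the largest step for which `c - ε • μ` stays nonnegative; it kills `c y₀`.
  set ε := c y₀ / μ y₀
  have hc' : ∀ y, 0 ≤ c y - ε * μ y := by
    intro y
    rcases le_or_gt (μ y) 0 with hy | hy
    · nlinarith [hc y, div_nonneg (hc y₀) hy₀.2.le]
    · have := hmin y ⟨hy.ne', hy⟩
      rw [le_div_iff₀ hy] at this
      linarith
  refine ⟨c - ε • μ, ⟨fun y hy => ?_, fun hsub => ?_⟩, fun y => by simpa using hc' y, ?_⟩
  · by_contra hyc
    have hμy : μ y = 0 := notMem_support_iff.1 (mt (@hμc y) hyc)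
    exact mem_support_iff.1 hy (by simp [notMem_support_iff.1 hyc, hμy])
  · have hy₀c : y₀ ∈ c.support := hμc (mem_support_iff.2 hy₀.1)
    have := mem_support_iff.1 (hsub hy₀c)
    simp [ε, div_mul_cancel₀ _ hy₀.1] at this
  · simp [hμ]

lemma neg_mem_hull_of_linearCombination_eq_zero {l : E →₀ ℝ} (hl : ∀ y, 0 ≤ l y)
    (h0 : linearCombination ℝ id l = 0) {t : E} (ht : t ∈ l.support) :
    -t ∈ hull ℝ (l.support : Set E) := by
  have hlt : 0 < l t := (hl t).lt_of_ne' (mem_support_iff.1 ht)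
  have heq : l t • -t = linearCombination ℝ id (l.erase t) := by
    rw [← single_add_erase t l, map_add, linearCombination_single] at h0
    rw [smul_neg, neg_eq_iff_add_eq_zero]
    simpa using h0
  rw [← smul_mem_iff _ hlt, heq]
  classical
  refine span_mono (by simp [support_erase]) (linearCombination_mem_hull fun y => ?_)
  rw [erase_apply]
  split_ifs <;> simp [hl]

lemma mem_hull_of_mkQ_mem_hull {s T : Set E} (hT : (span ℝ T : PointedCone ℝ E) ≤ hull ℝ T)
    (hTs : T ⊆ s) {x : E} (hx : (span ℝ T).mkQ x ∈ hull ℝ ((span ℝ T).mkQ '' s)) :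
    x ∈ hull ℝ s := by
  have hmap : hull ℝ ((span ℝ T).mkQ '' s) = (hull ℝ s).map (span ℝ T).mkQ :=
    (Submodule.map_span ((span ℝ T).mkQ.restrictScalars {c : ℝ // 0 ≤ c}) s).symm
  obtain ⟨y, hy, hyx⟩ := mem_map.1 (hmap ▸ hx)
  have hxy : x - y ∈ span ℝ T := (Submodule.Quotient.eq _).1 hyx.symm
  simpa using add_mem hy (span_mono hTs (hT hxy))

/-- Carathéodory's theorem for cones. -/
theorem exists_linearIndepOn_of_mem_hull {s : Set E} {x : E} (hx : x ∈ hull ℝ s) :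
    ∃ c : E →₀ ℝ, ↑c.support ⊆ s ∧ (∀ y, 0 ≤ c y) ∧ LinearIndepOn ℝ id (c.support : Set E) ∧
      linearCombination ℝ id c = x := by
  obtain ⟨c, hcs, hc, rfl⟩ := mem_hull_set.1 hx
  have hsum : (c.sum fun m r => r • m) = linearCombination ℝ id c := by
    simp [linearCombination_apply]
  rw [hsum]
  clear hx hsum
  induction hn : c.support.card using Nat.strong_induction_on generalizing c with
  | _ n ih =>
  by_cases hli : LinearIndepOn ℝ id (c.support : Set E)
  · exact ⟨c, hcs, hc, hli, rfl⟩
  obtain ⟨μ, hμc, hμ, hμne⟩ : ∃ μ ∈ supported ℝ ℝ (c.support : Set E),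
      linearCombination ℝ id μ = 0 ∧ μ ≠ 0 := by
    simpa [linearIndepOn_iff] using hli
  obtain ⟨y, hy⟩ := DFunLike.ne_iff.1 hμne
  obtain ⟨c', hss, hc', hc'c⟩ : ∃ c' : E →₀ ℝ, c'.support ⊂ c.support ∧ (∀ y, 0 ≤ c' y) ∧
      linearCombination ℝ id c' = linearCombination ℝ id c := by
    rw [mem_supported, Finset.coe_subset] at hμc
    rcases lt_or_gt_of_ne hy with hy | hy
    · exact exists_support_ssubset_of_relation (μ := -μ) hc (by simpa using hμc) (by simp [hμ])
        ⟨y, by simpa using hy⟩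
    · exact exists_support_ssubset_of_relation hc hμc hμ ⟨y, hy⟩
  rw [← hc'c]
  exact ih _ (hn ▸ Finset.card_lt_card hss) c' ((Finset.coe_subset.2 hss.subset).trans hcs)
    hc' rfl

end PointedCone

def IsPositiveBasis (A : Set E) : Prop :=
  hull ℝ A = ⊤ ∧ ∀ a ∈ A, a ∉ hull ℝ (A \ {a})

namespace IsPositiveBasis

variable {A : Set E}

lemma finite [FiniteDimensional ℝ E] (hA : IsPositiveBasis A) : A.Finite := by
  have hfg : (hull ℝ A).FG := hA.1 ▸ fg_top
  obtain ⟨F, hFA, hF⟩ : ∃ F : Finset E, ↑F ⊆ A ∧ hull ℝ A = hull ℝ (F : Set E) :=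
    (fg_span_iff_fg_span_finset_subset A).1 hfg
  refine F.finite_toSet.subset fun a ha => by_contra fun haF => hA.2 a ha ?_
  have haF' : a ∈ hull ℝ (F : Set E) := by rw [← hF, hA.1]; trivial
  exact span_mono (show (F : Set E) ⊆ A \ {a} from fun x hx => ⟨hFA hx, fun h => haF (h ▸ hx)⟩)
    haF'

lemma zero_notMem (hA : IsPositiveBasis A) : (0 : E) ∉ A :=
  fun h => hA.2 0 h (zero_mem _)

lemma exists_circuit (hA : IsPositiveBasis A) {a : E} (ha : a ∈ A) :
    ∃ T : Finset E, ↑T ⊆ A ∧ (span ℝ (T : Set E) : PointedCone ℝ E) ≤ hull ℝ T ∧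
      T.card ≤ finrank ℝ (span ℝ (T : Set E)) + 1 ∧ 0 < finrank ℝ (span ℝ (T : Set E)) := by
  classical
  obtain ⟨c, hcA, hc, hli, hca⟩ :=
    exists_linearIndepOn_of_mem_hull (hA.1 ▸ mem_top : -a ∈ hull ℝ A)
  set l := single a 1 + c
  have hsingle : ∀ y, 0 ≤ single a (1 : ℝ) y := fun y => by
    rw [single_apply]
    split_ifs <;> simp
  have hl : ∀ y, 0 ≤ l y := fun y => add_nonneg (hsingle y) (hc y)
  have hl0 : linearCombination ℝ id l = 0 := by simp [l, hca]
  have hcl : c.support ⊆ l.support := fun y hy => mem_support_iff.2 <| ne_of_gt <|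
    add_pos_of_nonneg_of_pos (hsingle y) ((hc y).lt_of_ne' (mem_support_iff.1 hy))
  have hal : a ∈ l.support := mem_support_iff.2 <| ne_of_gt <| by
    simpa [l] using add_pos_of_pos_of_nonneg one_pos (hc a)
  have hlA : l.support ⊆ insert a c.support := support_add.trans <|
    Finset.union_subset (support_single_subset.trans (by simp)) (Finset.subset_insert _ _)
  refine ⟨l.support, ?_, span_le_of_forall_neg_mem fun t ht =>
    ⟨subset_hull ht, neg_mem_hull_of_linearCombination_eq_zero hl hl0 ht⟩, ?_, ?_⟩
  · rw [← Set.insert_eq_of_mem ha]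
    exact (Finset.coe_subset.2 hlA).trans (by simpa using Set.insert_subset_insert hcA)
  · calc l.support.card ≤ c.support.card + 1 :=
          (Finset.card_le_card hlA).trans (Finset.card_insert_le _ _)
      _ = finrank ℝ (span ℝ (c.support : Set E)) + 1 := by rw [finrank_span_finset_eq_card hli]
      _ ≤ finrank ℝ (span ℝ (l.support : Set E)) + 1 := by
        gcongr; exact finrank_mono (span_mono (Finset.coe_subset.2 hcl))
  · exact one_le_finrank_iff.2 fun h => hA.zero_notMem (span_eq_bot.1 h a hal ▸ ha)

lemma mkQ_image_diff {T : Set E} (hA : IsPositiveBasis A) (hTA : T ⊆ A)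
    (hT : (span ℝ T : PointedCone ℝ E) ≤ hull ℝ T) :
    IsPositiveBasis ((span ℝ T).mkQ '' (A \ T)) ∧ Set.InjOn (span ℝ T).mkQ (A \ T) := by
  set π := (span ℝ T).mkQ
  have hnotMem : ∀ a ∈ A \ T, π a ∉ hull ℝ (π '' (A \ {a})) := fun a ha h =>
    hA.2 a ha.1 <| mem_hull_of_mkQ_mem_hull hT
      (show T ⊆ A \ {a} from fun t ht => ⟨hTA ht, fun h => ha.2 (h ▸ ht)⟩) h
  refine ⟨⟨eq_top_iff.2 fun x _ => ?_, ?_⟩, fun a ha b hb hab => by_contra fun hne =>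
    hnotMem a ha (subset_hull ⟨b, ⟨hb.1, fun h => hne h.symm⟩, hab.symm⟩)⟩
  · obtain ⟨x, rfl⟩ := (span ℝ T).mkQ_surjective x
    have hle : hull ℝ A ≤ (hull ℝ (π '' (A \ T))).comap π := span_le.2 fun a ha => by
      by_cases haT : a ∈ T
      · have hπa : π a = 0 := (Submodule.Quotient.mk_eq_zero _).2 (Submodule.subset_span haT)
        exact PointedCone.mem_comap.2 (hπa ▸ zero_mem _)
      · exact subset_hull ⟨a, ⟨ha, haT⟩, rfl⟩
    exact hle (hA.1 ▸ mem_top)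
  · rintro _ ⟨a, ha, rfl⟩ h
    refine hnotMem a ha (span_mono ?_ h)
    rintro _ ⟨⟨b, hb, rfl⟩, hne⟩
    exact ⟨b, ⟨hb.1, fun h => hne (h ▸ rfl)⟩, rfl⟩

theorem ncard_le [FiniteDimensional ℝ E] (hA : IsPositiveBasis A) :
    A.ncard ≤ 2 * finrank ℝ E := by
  induction hn : finrank ℝ E using Nat.strong_induction_on generalizing E A with
  | _ n ih =>
  rcases A.eq_empty_or_nonempty with rfl | ⟨a, ha⟩
  · simp
  obtain ⟨T, hTA, hT, hcard, hpos⟩ := hA.exists_circuit ha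
  obtain ⟨hQ, hinj⟩ := hA.mkQ_image_diff hTA hT
  have hdim := (span ℝ (T : Set E)).finrank_quotient_add_finrank
  have hQcard := ih _ (by omega) hQ rfl
  rw [hinj.ncard_image] at hQcard
  have hsplit := Set.ncard_sdiff_add_ncard_of_subset hTA hA.finite
  rw [Set.ncard_coe_finset] at hsplit
  omega

end IsPositiveBasis

end

lemma posHull_eq_hull {d : ℕ} (A : Set (EuclideanSpace ℝ (Fin d))) :
    posHull A = hull ℝ A := by
  ext x
  simp only [posHull, Set.mem_ofPred_eq, SetLike.mem_coe, mem_span_set']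
  constructor
  · rintro ⟨n, c, f, hc, hf, rfl⟩
    exact ⟨n, fun i => ⟨c i, hc i⟩, fun i => ⟨f i, hf i⟩, by simp [Nonneg.mk_smul]⟩
  · rintro ⟨n, c, f, rfl⟩
    exact ⟨n, fun i => c i, fun i => f i, fun i => (c i).2, fun i => (f i).2, rfl⟩

lemma IsPosBasisOf.isPositiveBasis {d : ℕ} {A : Set (EuclideanSpace ℝ (Fin d))}
    (hA : IsPosBasisOf A Set.univ) : IsPositiveBasis A := by
  simp only [IsPosBasisOf, posHull_eq_hull, Submodule.coe_eq_univ, ne_eq] at hA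
  refine ⟨hA.1, fun a ha hmem => hA.2 a ha ?_⟩
  have hdel : hull ℝ (A \ {a}) = hull ℝ A := by
    simpa [Set.insert_eq_of_mem ha] using (span_insert_eq_span hmem).symm
  exact hdel.trans hA.1

theorem posBasis_card_le (d : ℕ) (A : Set (EuclideanSpace ℝ (Fin d)))
    (hA : IsPosBasisOf A Set.univ) :
    A.Finite ∧ A.ncard ≤ 2 * d := by
  have hA' := hA.isPositiveBasis
  exact ⟨hA'.finite, by simpa using hA'.ncard_le⟩
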